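/- For |q|<1 and complex z, ω, the identity ∑_{n₁,n₂≥0} z^{n₁} ω^{n₂} q^{n₁² + 2n₁n₂ + 2n₂² + n₁ + n₂} (-zq²;q²)_{n₂} / ((q²;q²)_{n₁} (q⁴;q⁴)_{n₂}) = (-zq²;q⁴)_∞ (-ωq³;q⁴)_∞ (-zq⁴;q⁴)_∞ holds. -/

import Mathlib

open scoped BigOperators

/-- Finite q-Pochhammer symbol `(a;q)_n`. -/
noncomputable def qPoch (a q : ℂ) (n : ℕ) : ℂ := ∏ j ∈ Finset.range n, (1 - a * q ^ j)

/-- Infinite q-Pochhammer symbol `(a;q)_∞`. -/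
noncomputable def qPochInf (a q : ℂ) : ℂ := ∏' j : ℕ, (1 - a * q ^ j)

open Filter

namespace Stmt8Aux

/-- Euler term. -/
noncomputable def eT (x Q : ℂ) (n : ℕ) : ℂ :=
  x ^ n * Q ^ (∑ i ∈ Finset.range n, i) / qPoch Q Q n

lemma qPoch_succ (a Q : ℂ) (n : ℕ) :
    qPoch a Q (n + 1) = qPoch a Q n * (1 - a * Q ^ n) := Finset.prod_range_succ _ _

lemma eT_zero (x Q : ℂ) : eT x Q 0 = 1 := by simp [eT, qPoch]

lemma one_sub_ne {Q : ℂ} (hQ : ‖Q‖ < 1) (n : ℕ) : (1 : ℂ) - Q * Q ^ n ≠ 0 := by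
  intro h
  have h1 : Q * Q ^ n = 1 := by linear_combination -h
  have h2 : ‖Q * Q ^ n‖ < 1 := by
    rw [norm_mul, norm_pow]
    calc ‖Q‖ * ‖Q‖ ^ n ≤ ‖Q‖ * 1 :=
          mul_le_mul_of_nonneg_left (pow_le_one₀ (norm_nonneg Q) hQ.le) (norm_nonneg Q)
      _ = ‖Q‖ := mul_one _
      _ < 1 := hQ
  rw [h1] at h2; simp at h2

lemma qPoch_QQ_ne_zero {Q : ℂ} (hQ : ‖Q‖ < 1) (n : ℕ) : qPoch Q Q n ≠ 0 := by
  rw [qPoch]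
  exact Finset.prod_ne_zero_iff.2 fun j _ => one_sub_ne hQ j

lemma eT_succ {Q : ℂ} (hQ : ‖Q‖ < 1) (x : ℂ) (n : ℕ) :
    eT x Q (n + 1) = eT x Q n * (x * Q ^ n / (1 - Q * Q ^ n)) := by
  rw [eT, eT, qPoch_succ, Finset.sum_range_succ, pow_add, pow_succ]
  have h1 := one_sub_ne hQ n
  have h2 := qPoch_QQ_ne_zero hQ n
  field_simp
  ring

lemma summable_norm_of_step {f g : ℕ → ℂ} (h : ∀ n, f (n + 1) = f n * g n)
    (hg : Tendsto g atTop (nhds 0)) : Summable fun n => ‖f n‖ := by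
  apply summable_of_ratio_norm_eventually_le (r := 1 / 2) (by norm_num)
  have h2 : ∀ᶠ n in atTop, ‖g n‖ ≤ 1 / 2 := by
    have := hg.norm
    simp only [norm_zero] at this
    exact (this.eventually_lt_const (by norm_num : (0:ℝ) < 1/2)).mono fun n hn => hn.le
  filter_upwards [h2] with n hn
  rw [norm_norm, norm_norm, h n, norm_mul]
  calc ‖f n‖ * ‖g n‖ ≤ ‖f n‖ * (1 / 2) := by gcongr
    _ = 1 / 2 * ‖f n‖ := by ring

lemma tendsto_const_pow {Q : ℂ} (hQ : ‖Q‖ < 1) (c : ℂ) :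
    Tendsto (fun n : ℕ => c * Q ^ n) atTop (nhds 0) := by
  simpa using (tendsto_pow_atTop_nhds_zero_of_norm_lt_one hQ).const_mul c

lemma summable_norm_eT {Q : ℂ} (hQ : ‖Q‖ < 1) (x : ℂ) :
    Summable fun n => ‖eT x Q n‖ := by
  apply summable_norm_of_step (fun n => eT_succ hQ x n)
  have h2 : Tendsto (fun n : ℕ => 1 - Q * Q ^ n) atTop (nhds 1) := by
    simpa using tendsto_const_nhds.sub (tendsto_const_pow hQ Q)
  simpa [Pi.div_def] using (tendsto_const_pow hQ x).div h2 one_ne_zero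

lemma summable_eT {Q : ℂ} (hQ : ‖Q‖ < 1) (x : ℂ) : Summable (eT x Q) :=
  (summable_norm_eT hQ x).of_norm


lemma eT_fe {Q : ℂ} (hQ : ‖Q‖ < 1) (x : ℂ) :
    ∑' n, eT x Q n = (1 + x) * ∑' n, eT (Q * x) Q n := by
  have hs1 := summable_eT hQ x
  have hs2 := summable_eT hQ (Q * x)
  have hd : ∀ n, eT x Q (n + 1) - eT (Q * x) Q (n + 1) = x * eT (Q * x) Q n := by
    intro n
    have h1 := one_sub_ne hQ n
    have h2 := qPoch_QQ_ne_zero hQ n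
    rw [eT, eT, eT, qPoch_succ, Finset.sum_range_succ, pow_add, pow_succ]
    field_simp
    ring
  have key : ∑' n, (eT x Q n - eT (Q * x) Q n) = x * ∑' n, eT (Q * x) Q n := by
    rw [Summable.tsum_eq_zero_add (hs1.sub hs2)]
    simp only [eT_zero, sub_self, zero_add]
    simp_rw [hd]
    rw [tsum_mul_left]
  rw [Summable.tsum_sub hs1 hs2] at key
  linear_combination key

lemma eT_prod {Q : ℂ} (hQ : ‖Q‖ < 1) (x : ℂ) (N : ℕ) :
    ∑' n, eT x Q n
      = (∏ j ∈ Finset.range N, (1 + x * Q ^ j)) * ∑' n, eT (Q ^ N * x) Q n := by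
  induction N with
  | zero => simp
  | succ N ih =>
    rw [ih, eT_fe hQ (Q ^ N * x), Finset.prod_range_succ,
      show Q * (Q ^ N * x) = Q ^ (N + 1) * x by ring]
    ring

lemma eT_scale (x Q : ℂ) (N n : ℕ) : eT (Q ^ N * x) Q n = Q ^ (N * n) * eT x Q n := by
  rw [eT, eT, mul_pow, ← pow_mul]
  ring

lemma eT_tail_tendsto {Q : ℂ} (hQ : ‖Q‖ < 1) (x : ℂ) :
    Tendsto (fun N => ∑' n, eT (Q ^ N * x) Q n) atTop (nhds 1) := by
  have hM : Summable fun n => ‖eT x Q (n + 1)‖ :=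
    (summable_nat_add_iff (f := fun n => ‖eT x Q n‖) 1).2 (summable_norm_eT hQ x)
  set M : ℝ := ∑' n, ‖eT x Q (n + 1)‖ with hMdef
  have hbound : ∀ N, ‖∑' n, eT (Q ^ N * x) Q (n + 1)‖ ≤ ‖Q‖ ^ N * M := by
    intro N
    have hsN : Summable fun n => ‖eT (Q ^ N * x) Q (n + 1)‖ :=
      (summable_nat_add_iff (f := fun n => ‖eT (Q ^ N * x) Q n‖) 1).2 (summable_norm_eT hQ (Q ^ N * x))
    refine (norm_tsum_le_tsum_norm hsN).trans ?_
    rw [hMdef, ← tsum_mul_left]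
    refine Summable.tsum_le_tsum (fun n => ?_) hsN (hM.mul_left _)
    rw [eT_scale, norm_mul, norm_pow]
    have h1 : ‖Q‖ ^ (N * (n + 1)) ≤ ‖Q‖ ^ N :=
      pow_le_pow_of_le_one (norm_nonneg Q) hQ.le (Nat.le_mul_of_pos_right N (Nat.succ_pos n))
    exact mul_le_mul_of_nonneg_right h1 (norm_nonneg _)
  have hz : Tendsto (fun N => ∑' n, eT (Q ^ N * x) Q (n + 1)) atTop (nhds 0) := by
    apply squeeze_zero_norm hbound
    have : Tendsto (fun N : ℕ => ‖Q‖ ^ N) atTop (nhds 0) := by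
      simpa using tendsto_pow_atTop_nhds_zero_of_norm_lt_one (x := ‖Q‖) (by simpa using hQ)
    simpa using this.mul_const M
  have heq : ∀ N, ∑' n, eT (Q ^ N * x) Q n = 1 + ∑' n, eT (Q ^ N * x) Q (n + 1) := by
    intro N
    rw [Summable.tsum_eq_zero_add (summable_eT hQ (Q ^ N * x)), eT_zero]
  simp_rw [heq]
  simpa using tendsto_const_nhds.add hz


lemma multipliable_one_sub (a : ℂ) {Q : ℂ} (hQ : ‖Q‖ < 1) :
    Multipliable fun j : ℕ => 1 - a * Q ^ j := by
  by_cases hz : ∃ j, (1 : ℂ) - a * Q ^ j = 0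
  · obtain ⟨j0, hj0⟩ := hz
    refine ⟨0, ?_⟩
    have hev : ∀ᶠ s : Finset ℕ in atTop, (∏ i ∈ s, ((1:ℂ) - a * Q ^ i)) = 0 := by
      filter_upwards [eventually_ge_atTop ({j0} : Finset ℕ)] with s hs
      exact Finset.prod_eq_zero (hs (Finset.mem_singleton_self j0)) hj0
    exact Tendsto.congr' (hev.mono fun s hs => hs.symm) tendsto_const_nhds
  · push_neg at hz
    have hsum : Summable fun j : ℕ => ‖-(a * Q ^ j)‖ := by
      simpa [norm_mul, norm_pow] using (summable_geometric_of_lt_one (norm_nonneg Q) hQ).mul_left ‖a‖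
    simpa [sub_eq_add_neg] using multipliable_one_add_of_summable hsum

lemma euler {Q : ℂ} (hQ : ‖Q‖ < 1) (x : ℂ) :
    ∑' n, eT x Q n = qPochInf (-x) Q := by
  have hm : Multipliable fun j : ℕ => 1 - -x * Q ^ j := multipliable_one_sub (-x) hQ
  have h1 : Tendsto
      (fun N => (∏ j ∈ Finset.range N, ((1:ℂ) - -x * Q ^ j)) * ∑' n, eT (Q ^ N * x) Q n)
      atTop (nhds (qPochInf (-x) Q * 1)) := by
    exact (hm.hasProd.tendsto_prod_nat).mul (eT_tail_tendsto hQ x)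
  have h2 : ∀ N, (∏ j ∈ Finset.range N, ((1:ℂ) - -x * Q ^ j)) * ∑' n, eT (Q ^ N * x) Q n
      = ∑' n, eT x Q n := by
    intro N
    rw [eT_prod hQ x N]
    congr 1
    exact Finset.prod_congr rfl fun j _ => by ring
  have h3 : Tendsto (fun _ : ℕ => ∑' n, eT x Q n) atTop (nhds (qPochInf (-x) Q * 1)) :=
    Tendsto.congr h2 h1
  simpa using tendsto_nhds_unique h3 tendsto_const_nhds |>.symm

lemma qPochInf_split (a : ℂ) {Q : ℂ} (hQ : ‖Q‖ < 1) (n : ℕ) :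
    qPochInf a Q = qPoch a Q n * qPochInf (a * Q ^ n) Q := by
  have hm : Multipliable fun i : ℕ => (1 : ℂ) - a * Q ^ (i + n) :=
    (multipliable_one_sub (a * Q ^ n) hQ).congr fun i => by rw [pow_add]; ring
  have h := Multipliable.prod_mul_tprod_nat_mul' (f := fun i => (1:ℂ) - a * Q ^ i) (k := n) hm
  rw [qPochInf, ← h, qPoch, qPochInf]
  congr 1
  exact tprod_congr fun i => by simp only [pow_add]; ring

lemma qPochInf_sq (a : ℂ) {Q : ℂ} (hQ : ‖Q‖ < 1) :
    qPochInf a Q = qPochInf a (Q ^ 2) * qPochInf (a * Q) (Q ^ 2) := by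
  have hQ2 : ‖Q ^ 2‖ < 1 := by
    rw [norm_pow]
    exact pow_lt_one₀ (norm_nonneg Q) hQ (by norm_num)
  have he : Multipliable fun k : ℕ => (1 : ℂ) - a * Q ^ (2 * k) :=
    (multipliable_one_sub a hQ2).congr fun k => by rw [pow_mul]
  have ho : Multipliable fun k : ℕ => (1 : ℂ) - a * Q ^ (2 * k + 1) :=
    (multipliable_one_sub (a * Q) hQ2).congr fun k => by
      rw [pow_add, pow_mul, pow_one]; ring
  have h := tprod_even_mul_odd (f := fun k => (1:ℂ) - a * Q ^ k) he ho
  rw [qPochInf, ← h, qPochInf, qPochInf]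
  congr 1
  · exact tprod_congr fun k => by simp only [pow_mul]
  · exact tprod_congr fun k => by simp only [pow_add, pow_mul, pow_one]; ring


/-- coefficient sequence -/
noncomputable def cS (q z ω : ℂ) (m : ℕ) : ℂ :=
  ω ^ m * q ^ (2 * m ^ 2 + m) * qPoch (-(z * q ^ 2)) (q ^ 2) m / qPoch (q ^ 4) (q ^ 4) m

lemma termA {q : ℂ} (z ω : ℂ) (hq2 : ‖q ^ 2‖ < 1) (hq4 : ‖q ^ 4‖ < 1) (n₂ n₁ : ℕ) :
    z ^ n₁ * ω ^ n₂ * q ^ (n₁ ^ 2 + 2 * n₁ * n₂ + 2 * n₂ ^ 2 + n₁ + n₂) *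
        qPoch (-(z * q ^ 2)) (q ^ 2) n₂ /
          (qPoch (q ^ 2) (q ^ 2) n₁ * qPoch (q ^ 4) (q ^ 4) n₂)
      = cS q z ω n₂ * eT (z * q ^ (2 * n₂ + 2)) (q ^ 2) n₁ := by
  have h1 := qPoch_QQ_ne_zero hq2 n₁
  have h2 := qPoch_QQ_ne_zero hq4 n₂
  have hpow : (q : ℂ) ^ (n₁ ^ 2 + 2 * n₁ * n₂ + 2 * n₂ ^ 2 + n₁ + n₂)
      = q ^ (2 * n₂ ^ 2 + n₂) * (q ^ (2 * n₂ + 2)) ^ n₁ *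
          (q ^ 2) ^ (∑ i ∈ Finset.range n₁, i) := by
    rw [← pow_mul q (2 * n₂ + 2) n₁, ← pow_mul q 2, ← pow_add, ← pow_add]
    congr 1
    have hs := Finset.sum_range_id_mul_two n₁
    cases n₁ with
    | zero => simp
    | succ k =>
      rw [Nat.succ_sub_one] at hs
      zify at hs ⊢
      linear_combination -hs
  rw [eT, cS, hpow]
  field_simp
  ring

lemma eTd {q : ℂ} (ω : ℂ) (m : ℕ) :
    eT (ω * q ^ 3) (q ^ 4) m = ω ^ m * q ^ (2 * m ^ 2 + m) / qPoch (q ^ 4) (q ^ 4) m := by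
  have hexp : 3 * m + 4 * (∑ i ∈ Finset.range m, i) = 2 * m ^ 2 + m := by
    have hs := Finset.sum_range_id_mul_two m
    cases m with
    | zero => simp
    | succ k =>
      rw [Nat.succ_sub_one] at hs
      zify at hs ⊢
      linear_combination 2 * hs
  rw [eT, mul_pow, ← pow_mul q 3 m, ← pow_mul q 4, mul_assoc, ← pow_add, hexp]

lemma cS_step {q : ℂ} (z ω : ℂ) (hq2 : ‖q ^ 2‖ < 1) (hq4 : ‖q ^ 4‖ < 1) (n : ℕ) :
    cS q z ω (n + 1) = cS q z ω n *
      (ω * q ^ 3 * (q ^ 4) ^ n * (1 - -(z * q ^ 2) * (q ^ 2) ^ n) / (1 - q ^ 4 * (q ^ 4) ^ n)) := by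
  have h2 := qPoch_QQ_ne_zero hq4 n
  have h3 := one_sub_ne hq4 n
  have hpow : (q : ℂ) ^ (2 * (n + 1) ^ 2 + (n + 1)) = q ^ (2 * n ^ 2 + n) * (q ^ 3 * (q ^ 4) ^ n) := by
    rw [← pow_mul q 4 n, ← pow_add, ← pow_add]
    congr 1
    ring
  rw [cS, cS, qPoch_succ, qPoch_succ, hpow]
  field_simp
  ring

lemma summable_norm_cS {q : ℂ} (z ω : ℂ) (hq2 : ‖q ^ 2‖ < 1) (hq4 : ‖q ^ 4‖ < 1) :
    Summable fun m => ‖cS q z ω m‖ := by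
  apply summable_norm_of_step (cS_step z ω hq2 hq4)
  have t4 : Tendsto (fun n : ℕ => ω * q ^ 3 * (q ^ 4) ^ n) atTop (nhds 0) :=
    tendsto_const_pow hq4 (ω * q ^ 3)
  have tz : Tendsto (fun n : ℕ => 1 - -(z * q ^ 2) * (q ^ 2) ^ n) atTop (nhds 1) := by
    simpa using tendsto_const_nhds.sub (tendsto_const_pow hq2 (-(z * q ^ 2)))
  have td : Tendsto (fun n : ℕ => 1 - q ^ 4 * (q ^ 4) ^ n) atTop (nhds 1) := by
    simpa using tendsto_const_nhds.sub (tendsto_const_pow hq4 (q ^ 4))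
  simpa [Pi.div_def] using (t4.mul tz).div td one_ne_zero


end Stmt8Aux

open Stmt8Aux

theorem stmt8 (q z ω : ℂ) (hq : ‖q‖ < 1) :
    ∑' n₁ : ℕ, ∑' n₂ : ℕ,
        z ^ n₁ * ω ^ n₂ * q ^ (n₁ ^ 2 + 2 * n₁ * n₂ + 2 * n₂ ^ 2 + n₁ + n₂) *
          qPoch (-(z * q ^ 2)) (q ^ 2) n₂ /
            (qPoch (q ^ 2) (q ^ 2) n₁ * qPoch (q ^ 4) (q ^ 4) n₂)
      = qPochInf (-(z * q ^ 2)) (q ^ 4) * qPochInf (-(ω * q ^ 3)) (q ^ 4) *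
          qPochInf (-(z * q ^ 4)) (q ^ 4) := by
  have hq' : ‖q‖ < 1 := by exact hq
  have hq2 : ‖q ^ 2‖ < 1 := by
    rw [norm_pow]; exact pow_lt_one₀ (norm_nonneg q) hq' (by norm_num)
  have hq4 : ‖q ^ 4‖ < 1 := by
    rw [norm_pow]; exact pow_lt_one₀ (norm_nonneg q) hq' (by norm_num)
  -- summability of the double family
  have hsl : ∀ m : ℕ, Summable fun n => ‖cS q z ω m * eT (z * q ^ (2 * m + 2)) (q ^ 2) n‖ := by
    intro m
    simp only [norm_mul]
    exact (summable_norm_eT hq2 _).mul_left _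
  have hTle : ∀ m n : ℕ, ‖eT (z * q ^ (2 * m + 2)) (q ^ 2) n‖ ≤ ‖eT (z * q ^ 2) (q ^ 2) n‖ := by
    intro m n
    have hx : ‖z * q ^ (2 * m + 2)‖ ≤ ‖z * q ^ 2‖ := by
      rw [norm_mul, norm_mul, norm_pow, norm_pow]
      exact mul_le_mul_of_nonneg_left
        (pow_le_pow_of_le_one (norm_nonneg q) hq'.le (by omega)) (norm_nonneg z)
    rw [eT, eT, norm_div, norm_div, norm_mul, norm_mul]
    gcongr
    rw [norm_pow, norm_pow]
    exact pow_le_pow_left₀ (norm_nonneg _) hx n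
  have hsums : Summable fun m => ∑' n, ‖cS q z ω m * eT (z * q ^ (2 * m + 2)) (q ^ 2) n‖ := by
    have hb : ∀ m, ∑' n, ‖cS q z ω m * eT (z * q ^ (2 * m + 2)) (q ^ 2) n‖
        ≤ ‖cS q z ω m‖ * ∑' n, ‖eT (z * q ^ 2) (q ^ 2) n‖ := by
      intro m
      simp only [norm_mul]
      rw [tsum_mul_left]
      exact mul_le_mul_of_nonneg_left
        (Summable.tsum_le_tsum (hTle m) (summable_norm_eT hq2 _) (summable_norm_eT hq2 _))
        (norm_nonneg _)
    exact Summable.of_nonneg_of_le (fun m => tsum_nonneg fun n => norm_nonneg _) hb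
      ((summable_norm_cS z ω hq2 hq4).mul_right _)
  have hF : Summable (Function.uncurry fun m n => cS q z ω m * eT (z * q ^ (2 * m + 2)) (q ^ 2) n) := by
    apply Summable.of_norm
    exact (summable_prod_of_nonneg (fun p => norm_nonneg _)).2 ⟨hsl, hsums⟩
  calc
    ∑' n₁ : ℕ, ∑' n₂ : ℕ,
        z ^ n₁ * ω ^ n₂ * q ^ (n₁ ^ 2 + 2 * n₁ * n₂ + 2 * n₂ ^ 2 + n₁ + n₂) *
          qPoch (-(z * q ^ 2)) (q ^ 2) n₂ /
            (qPoch (q ^ 2) (q ^ 2) n₁ * qPoch (q ^ 4) (q ^ 4) n₂)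
        = ∑' n₁ : ℕ, ∑' n₂ : ℕ, cS q z ω n₂ * eT (z * q ^ (2 * n₂ + 2)) (q ^ 2) n₁ :=
      tsum_congr fun n₁ => tsum_congr fun n₂ => termA z ω hq2 hq4 n₂ n₁
    _ = ∑' m : ℕ, ∑' n : ℕ, cS q z ω m * eT (z * q ^ (2 * m + 2)) (q ^ 2) n := Summable.tsum_comm hF
    _ = ∑' m : ℕ, cS q z ω m * qPochInf (-(z * q ^ (2 * m + 2))) (q ^ 2) := by
      refine tsum_congr fun m => ?_
      rw [tsum_mul_left, euler hq2]
    _ = ∑' m : ℕ, eT (ω * q ^ 3) (q ^ 4) m * qPochInf (-(z * q ^ 2)) (q ^ 2) := by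
      refine tsum_congr fun m => ?_
      have harg : -(z * q ^ 2) * (q ^ 2) ^ m = -(z * q ^ (2 * m + 2)) := by
        rw [← pow_mul q 2 m, show 2 * m + 2 = 2 + 2 * m from by ring, pow_add]
        ring
      rw [qPochInf_split (-(z * q ^ 2)) hq2 m, harg, cS, eTd]
      ring
    _ = (∑' m : ℕ, eT (ω * q ^ 3) (q ^ 4) m) * qPochInf (-(z * q ^ 2)) (q ^ 2) :=
      tsum_mul_right
    _ = qPochInf (-(ω * q ^ 3)) (q ^ 4) * qPochInf (-(z * q ^ 2)) (q ^ 2) := by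
      rw [euler hq4]
    _ = qPochInf (-(z * q ^ 2)) (q ^ 4) * qPochInf (-(ω * q ^ 3)) (q ^ 4) *
          qPochInf (-(z * q ^ 4)) (q ^ 4) := by
      rw [qPochInf_sq (-(z * q ^ 2)) hq2,
        show ((q : ℂ) ^ 2) ^ 2 = q ^ 4 from by ring,
        show -(z * q ^ 2) * q ^ 2 = -(z * q ^ 4) from by ring]
      ring
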